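/- For every u > 0 there is a constant C = C(u) > 0 such that for every sequence (a_n)_{n≥1} of complex numbers with ∑_{n=1}^∞ |a_n|² < ∞ one has (∫_{𝕋^∞} sup_{N∈ℕ} |∑_{n=1}^N a_n n^{−u} χ_z(n)|² dm(z))^{1/2} ≤ C (∑_{n=1}^∞ |a_n|²)^{1/2}. -/

import Mathlib

open MeasureTheory Filter Topology Finset
open scoped ENNReal NNReal

noncomputable section

/-- Borel measurable structure on the circle `𝕋 = {w ∈ ℂ : |w| = 1}`. -/
instance : MeasurableSpace Circle := borel Circle
instance : BorelSpace Circle := ⟨rfl⟩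

/-- The infinite torus `𝕋^∞`, the countable product of circles. -/
abbrev TorusInf : Type := ℕ → Circle

/-- The Haar probability measure `m` on the compact abelian group `𝕋^∞`. -/
def haarT : Measure TorusInf :=
  Measure.haarMeasure ⟨⟨Set.univ, isCompact_univ⟩, by simp⟩

/-- The completely multiplicative character `χ_z : ℕ → 𝕋` determined by `z ∈ 𝕋^∞`:
`χ_z(n) = ∏_k z_k ^ ν_k(n)`, where `ν_k(n)` is the exponent of the `k`-th prime `p_k`
in the prime factorization of `n` (primes are enumerated by `Nat.nth Nat.Prime`, and
the index of a prime `p` is `Nat.count Nat.Prime p`). -/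
def chiz (z : TorusInf) (n : ℕ) : ℂ :=
  ∏ p ∈ n.primeFactors, (z (Nat.count Nat.Prime p) : ℂ) ^ (n.factorization p)

/-!
For `n ≥ 1` the functions `z ↦ χ_z(n)` are orthonormal in `L²(m)`: if `n ≠ m`, some prime `p`
occurs in `n` and `m` with exponents `e ≠ e'`, and multiplying the `p`-th coordinate by
`ζ = exp(iπ/(e' - e))` negates `conj χ_z(n) · χ_z(m)`, so its Haar integral vanishes.
For an orthogonal system, the Rademacher–Menshov argument bounds the `L²` norm of the maximal
partial sum over a block of length `2^K` by `(K + 1)` times the `ℓ²` norm of the block: a partial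
sum of the block is either a partial sum of its first half, or the whole first half plus a partial
sum of the second half. Every partial sum `∑_{n ≤ N}` is at most the sum over `k` of the maxima on
the dyadic blocks `[2^k, 2^(k+1))`, where `|a_n n^(-u)| ≤ 2^(-ku) |a_n|`; Minkowski's inequality
then gives the constant `∑_k (k + 1) 2^(-ku) = (1 - 2^(-u))^(-2)`.
-/

open scoped InnerProductSpace ComplexConjugate

namespace ENNReal

lemma rpow_half_sq (x : ℝ≥0∞) : (x ^ (1 / 2 : ℝ)) ^ 2 = x := by
  simpa using rpow_inv_natCast_pow two_ne_zero x

lemma sq_rpow_half (x : ℝ≥0∞) : (x ^ 2) ^ (1 / 2 : ℝ) = x := by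
  simpa using pow_rpow_inv_natCast two_ne_zero x

lemma le_mul_rpow_half_of_sq_le {x c w : ℝ≥0∞} (h : x ^ 2 ≤ c ^ 2 * w) :
    x ≤ c * w ^ (1 / 2 : ℝ) :=
  calc x = (x ^ 2) ^ (1 / 2 : ℝ) := (sq_rpow_half x).symm
    _ ≤ (c ^ 2 * w) ^ (1 / 2 : ℝ) := rpow_le_rpow h (by norm_num)
    _ = c * w ^ (1 / 2 : ℝ) := by rw [mul_rpow_of_nonneg _ _ (by norm_num), sq_rpow_half]

end ENNReal

section LpSeminorm

variable {α : Type*} [MeasurableSpace α] {μ : Measure α}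

lemma eLpNorm_two_sq {ε : Type*} [ENorm ε] (f : α → ε) :
    eLpNorm f 2 μ ^ 2 = ∫⁻ x, ‖f x‖ₑ ^ 2 ∂μ := by
  simpa using eLpNorm_nnreal_pow_eq_lintegral (f := f) (μ := μ) (p := 2) two_ne_zero

lemma eLpNorm_two_eq_lintegral_sq_rpow_half (g : α → ℝ≥0∞) :
    eLpNorm g 2 μ = (∫⁻ x, g x ^ 2 ∂μ) ^ (1 / 2 : ℝ) := by
  rw [← ENNReal.sq_rpow_half (eLpNorm g 2 μ), eLpNorm_two_sq]
  simp only [enorm_eq_self]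

lemma eLpNorm_max_sq_le {g h : α → ℝ≥0∞} (hg : AEMeasurable g μ) :
    eLpNorm (fun x => max (g x) (h x)) 2 μ ^ 2 ≤ eLpNorm g 2 μ ^ 2 + eLpNorm h 2 μ ^ 2 := by
  simp only [eLpNorm_two_sq, enorm_eq_self]
  rw [← lintegral_add_left' (hg.pow_const 2)]
  refine lintegral_mono fun x => ?_
  rcases le_total (g x) (h x) with hle | hle
  · rw [max_eq_right hle]; exact le_add_self
  · rw [max_eq_left hle]; exact le_self_add

lemma eLpNorm_iSup_of_monotone {p : ℝ≥0∞} (hp0 : p ≠ 0) (hp : p ≠ ∞) {F : ℕ → α → ℝ≥0∞}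
    (hF : ∀ n, AEMeasurable (F n) μ) (hmono : Monotone F) :
    eLpNorm (fun x => ⨆ n, F n x) p μ = ⨆ n, eLpNorm (F n) p μ := by
  have hq : 0 < p.toReal := ENNReal.toReal_pos hp0 hp
  have iSup_rpow : ∀ {y : ℝ} (hy : 0 < y) (a : ℕ → ℝ≥0∞), (⨆ n, a n) ^ y = ⨆ n, a n ^ y :=
    fun hy a => (ENNReal.orderIsoRpow _ hy).map_iSup a
  simp only [eLpNorm_eq_lintegral_rpow_enorm_toReal hp0 hp, enorm_eq_self]
  simp_rw [iSup_rpow hq]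
  rw [lintegral_iSup' (fun n => (hF n).pow_const _)
    (ae_of_all _ fun x m n hmn => ENNReal.rpow_le_rpow (hmono hmn x) hq.le),
    iSup_rpow (one_div_pos.mpr hq)]

lemma eLpNorm_tsum_le {p : ℝ≥0∞} (hp1 : 1 ≤ p) (hp : p ≠ ∞) {g : ℕ → α → ℝ≥0∞}
    (hg : ∀ k, AEMeasurable (g k) μ) :
    eLpNorm (fun x => ∑' k, g k x) p μ ≤ ∑' k, eLpNorm (g k) p μ := by
  simp only [ENNReal.tsum_eq_iSup_nat]
  rw [eLpNorm_iSup_of_monotone (F := fun n x => ∑ k ∈ range n, g k x) (by positivity) hp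
    (fun n => Finset.aemeasurable_fun_sum _ fun k _ => hg k)
    (fun m n hmn x => Finset.sum_le_sum_of_subset (Finset.range_subset_range.mpr hmn))]
  refine iSup_mono fun n => ?_
  rw [← Finset.sum_fn]
  exact eLpNorm_sum_le (fun k _ => (hg k).aestronglyMeasurable) hp1

end LpSeminorm

section Orthogonal

variable {α 𝕜 E ι : Type*} [MeasurableSpace α] {μ : Measure α} [RCLike 𝕜] [NormedAddCommGroup E]
  [InnerProductSpace 𝕜 E]

lemma MeasureTheory.MemLp.integrable_inner {f g : α → E} (hf : MemLp f 2 μ) (hg : MemLp g 2 μ) :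
    Integrable (fun x => ⟪f x, g x⟫_𝕜) μ :=
  (hf.norm.integrable_mul hg.norm).mono (hf.1.inner hg.1)
    (ae_of_all _ fun x => by simpa using norm_inner_le_norm (𝕜 := 𝕜) (f x) (g x))

lemma MeasureTheory.MemLp.eLpNorm_two_sq_eq_ofReal_integral {f : α → E} (hf : MemLp f 2 μ) :
    eLpNorm f 2 μ ^ 2 = ENNReal.ofReal (∫ x, ‖f x‖ ^ 2 ∂μ) := by
  rw [eLpNorm_two_sq, ofReal_integral_eq_lintegral_ofReal
    (hf.integrable_norm_pow two_ne_zero) (ae_of_all _ fun x => by positivity)]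
  simp_rw [← ofReal_norm, ENNReal.ofReal_pow (norm_nonneg _)]

theorem integral_norm_sum_sq_eq_of_orthogonal {f : ι → α → E} (hf : ∀ i, MemLp (f i) 2 μ)
    (horth : Pairwise fun i j => ∫ x, ⟪f i x, f j x⟫_𝕜 ∂μ = 0) (t : Finset ι) :
    ∫ x, ‖∑ i ∈ t, f i x‖ ^ 2 ∂μ = ∑ i ∈ t, ∫ x, ‖f i x‖ ^ 2 ∂μ := by
  have hint : ∀ i j, Integrable (fun x => ⟪f i x, f j x⟫_𝕜) μ :=
    fun i j => (hf i).integrable_inner (hf j)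
  calc ∫ x, ‖∑ i ∈ t, f i x‖ ^ 2 ∂μ
      = ∫ x, RCLike.re (∑ i ∈ t, ∑ j ∈ t, ⟪f i x, f j x⟫_𝕜) ∂μ := by
        congr 1 with x
        rw [← inner_self_eq_norm_sq (𝕜 := 𝕜), sum_inner]
        simp only [inner_sum]
    _ = RCLike.re (∑ i ∈ t, ∑ j ∈ t, ∫ x, ⟪f i x, f j x⟫_𝕜 ∂μ) := by
        rw [integral_re (integrable_finsetSum _ fun i _ => integrable_finsetSum _
          fun j _ => hint i j), integral_finsetSum _ fun i _ => integrable_finsetSum _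
          fun j _ => hint i j]
        simp_rw [integral_finsetSum _ fun j _ => hint _ j]
    _ = RCLike.re (∑ i ∈ t, ∫ x, ⟪f i x, f i x⟫_𝕜 ∂μ) := by
        congr 1
        exact sum_congr rfl fun i hi => sum_eq_single_of_mem i hi fun j _ hji => horth hji.symm
    _ = ∑ i ∈ t, ∫ x, ‖f i x‖ ^ 2 ∂μ := by
        rw [map_sum]
        refine sum_congr rfl fun i _ => ?_
        rw [← integral_re (hint i i)]
        simp_rw [inner_self_eq_norm_sq (𝕜 := 𝕜)]

theorem eLpNorm_sum_sq_eq_of_orthogonal {f : ι → α → E} (hf : ∀ i, MemLp (f i) 2 μ)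
    (horth : Pairwise fun i j => ∫ x, ⟪f i x, f j x⟫_𝕜 ∂μ = 0) (t : Finset ι) :
    eLpNorm (fun x => ∑ i ∈ t, f i x) 2 μ ^ 2 = ∑ i ∈ t, eLpNorm (f i) 2 μ ^ 2 := by
  have hsum : MemLp (fun x => ∑ i ∈ t, f i x) 2 μ := memLp_finsetSum t fun i _ => hf i
  simp only [hsum.eLpNorm_two_sq_eq_ofReal_integral, (hf _).eLpNorm_two_sq_eq_ofReal_integral,
    integral_norm_sum_sq_eq_of_orthogonal hf horth]
  exact ENNReal.ofReal_sum_of_nonneg fun i _ => integral_nonneg fun x => by positivity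

end Orthogonal

section MaxPartialSum

variable {E : Type*} [NormedAddCommGroup E]

def maxPartialSum (f : ℕ → E) (s L : ℕ) : ℝ≥0∞ :=
  ⨆ m ≤ L, ‖∑ n ∈ Ico s (s + m), f n‖ₑ

lemma enorm_sum_Ico_le_maxPartialSum (f : ℕ → E) {s m L : ℕ} (h : m ≤ L) :
    ‖∑ n ∈ Ico s (s + m), f n‖ₑ ≤ maxPartialSum f s L :=
  le_iSup₂ (f := fun m (_ : m ≤ L) => ‖∑ n ∈ Ico s (s + m), f n‖ₑ) m h

lemma maxPartialSum_one (f : ℕ → E) (s : ℕ) :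
    maxPartialSum f s 1 = ‖∑ n ∈ Ico s (s + 1), f n‖ₑ := by
  refine le_antisymm (iSup₂_le fun m hm => ?_) (enorm_sum_Ico_le_maxPartialSum f le_rfl)
  rcases Nat.le_one_iff_eq_zero_or_eq_one.mp hm with rfl | rfl <;> simp

lemma maxPartialSum_add_le (f : ℕ → E) (s L : ℕ) :
    maxPartialSum f s (L + L) ≤
      max (maxPartialSum f s L) (maxPartialSum f (s + L) L) + ‖∑ n ∈ Ico s (s + L), f n‖ₑ := by
  refine iSup₂_le fun m hm => ?_
  rcases le_or_gt m L with hmL | hLm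
  · exact le_add_right (le_max_of_le_left (enorm_sum_Ico_le_maxPartialSum f hmL))
  · obtain ⟨j, rfl⟩ := Nat.exists_eq_add_of_le hLm.le
    have hj : ‖∑ n ∈ Ico (s + L) (s + L + j), f n‖ₑ ≤ maxPartialSum f (s + L) L :=
      enorm_sum_Ico_le_maxPartialSum f (by omega)
    rw [← add_assoc, ← sum_Ico_consecutive f (Nat.le_add_right s L) (Nat.le_add_right _ j),
      add_comm (max _ _)]
    exact (enorm_add_le _ _).trans (by gcongr; exact le_max_of_le_right hj)

lemma enorm_sum_Ico_one_le_sum_maxPartialSum (f : ℕ → E) (K : ℕ) :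
    ∀ N ≤ 2 ^ K, ‖∑ n ∈ Ico 1 N, f n‖ₑ ≤ ∑ k ∈ range K, maxPartialSum f (2 ^ k) (2 ^ k) := by
  induction K with
  | zero =>
    intro N hN
    rw [Ico_eq_empty_of_le (show N ≤ 1 by simpa using hN)]
    simp
  | succ K ih =>
    intro N hN
    rw [sum_range_succ]
    rcases le_or_gt N (2 ^ K) with hNK | hKN
    · exact le_add_right (ih N hNK)
    · obtain ⟨j, rfl⟩ := Nat.exists_eq_add_of_le hKN.le
      rw [← sum_Ico_consecutive _ Nat.one_le_two_pow hKN.le]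
      refine (enorm_add_le _ _).trans (add_le_add (ih _ le_rfl) ?_)
      exact enorm_sum_Ico_le_maxPartialSum f (by rw [pow_succ] at hN; omega)

lemma enorm_sum_Icc_one_le_tsum_maxPartialSum (f : ℕ → E) (N : ℕ) :
    ‖∑ n ∈ Icc 1 N, f n‖ₑ ≤ ∑' k, maxPartialSum f (2 ^ k) (2 ^ k) := by
  rw [← Ico_add_one_right_eq_Icc]
  exact (enorm_sum_Ico_one_le_sum_maxPartialSum f (N + 1) _ (Nat.lt_two_pow_self).le).trans
    (ENNReal.sum_le_tsum _)

end MaxPartialSum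

section RademacherMenshov

variable {α E : Type*} [MeasurableSpace α] {μ : Measure α} [NormedAddCommGroup E]
  {F : ℕ → α → E}

lemma aemeasurable_maxPartialSum (hF : ∀ n, AEStronglyMeasurable (F n) μ) (s L : ℕ) :
    AEMeasurable (fun x => maxPartialSum (F · x) s L) μ :=
  AEMeasurable.iSup fun _ => AEMeasurable.iSup fun _ =>
    (Finset.aestronglyMeasurable_fun_sum _ fun n _ => hF n).enorm

theorem eLpNorm_maxPartialSum_le (hF : ∀ n, AEStronglyMeasurable (F n) μ) {w : ℕ → ℝ≥0∞}
    (hw : ∀ s m, eLpNorm (fun x => ∑ n ∈ Ico s (s + m), F n x) 2 μ ≤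
      (∑ n ∈ Ico s (s + m), w n) ^ (1 / 2 : ℝ)) (K s : ℕ) :
    eLpNorm (fun x => maxPartialSum (F · x) s (2 ^ K)) 2 μ ≤
      (K + 1) * (∑ n ∈ Ico s (s + 2 ^ K), w n) ^ (1 / 2 : ℝ) := by
  induction K generalizing s with
  | zero =>
    simp only [pow_zero, maxPartialSum_one, CharP.cast_eq_zero, zero_add, one_mul]
    exact (eLpNorm_enorm _).trans_le (hw s 1)
  | succ K ih =>
    set W₁ := ∑ n ∈ Ico s (s + 2 ^ K), w n
    set W₂ := ∑ n ∈ Ico (s + 2 ^ K) (s + 2 ^ K + 2 ^ K), w n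
    have hW : ∑ n ∈ Ico s (s + 2 ^ (K + 1)), w n = W₁ + W₂ := by
      rw [pow_succ, mul_two, ← add_assoc,
        sum_Ico_consecutive w (Nat.le_add_right s _) (Nat.le_add_right _ _)]
    have hmax : eLpNorm (fun x => max (maxPartialSum (F · x) s (2 ^ K))
        (maxPartialSum (F · x) (s + 2 ^ K) (2 ^ K))) 2 μ ≤ (K + 1) * (W₁ + W₂) ^ (1 / 2 : ℝ) := by
      refine ENNReal.le_mul_rpow_half_of_sq_le ?_
      refine (eLpNorm_max_sq_le (aemeasurable_maxPartialSum hF s _)).trans ?_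
      rw [mul_add]
      gcongr <;> exact (pow_le_pow_left' (ih _) 2).trans_eq
        (by rw [mul_pow, ENNReal.rpow_half_sq])
    have hhead : eLpNorm (fun x => ‖∑ n ∈ Ico s (s + 2 ^ K), F n x‖ₑ) 2 μ ≤
        (W₁ + W₂) ^ (1 / 2 : ℝ) :=
      (eLpNorm_enorm _).trans_le <| (hw s _).trans <|
        ENNReal.rpow_le_rpow le_self_add (by norm_num)
    calc eLpNorm (fun x => maxPartialSum (F · x) s (2 ^ (K + 1))) 2 μ
        ≤ eLpNorm (fun x => max (maxPartialSum (F · x) s (2 ^ K))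
            (maxPartialSum (F · x) (s + 2 ^ K) (2 ^ K)) +
            ‖∑ n ∈ Ico s (s + 2 ^ K), F n x‖ₑ) 2 μ := by
          refine eLpNorm_mono_enorm fun x => ?_
          simp only [enorm_eq_self, pow_succ, mul_two]
          exact maxPartialSum_add_le _ s _
      _ ≤ (K + 1) * (W₁ + W₂) ^ (1 / 2 : ℝ) + (W₁ + W₂) ^ (1 / 2 : ℝ) :=
          (eLpNorm_add_le ((aemeasurable_maxPartialSum hF s _).max
            (aemeasurable_maxPartialSum hF _ _)).aestronglyMeasurable
            (Finset.aestronglyMeasurable_fun_sum _ fun n _ => hF n).enorm.aestronglyMeasurable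
            one_le_two).trans (add_le_add hmax hhead)
      _ = ((K + 1 : ℕ) + 1) * (∑ n ∈ Ico s (s + 2 ^ (K + 1)), w n) ^ (1 / 2 : ℝ) := by
          rw [hW]; push_cast; ring

end RademacherMenshov

instance : Measure.IsMulLeftInvariant haarT := by unfold haarT; infer_instance

instance : IsProbabilityMeasure haarT := ⟨Measure.haarMeasure_self⟩

lemma continuous_chiz (n : ℕ) : Continuous fun z : TorusInf => chiz z n :=
  continuous_finsetProd _ fun _ _ => (continuous_subtype_val.comp (continuous_apply _)).pow _

lemma norm_chiz (z : TorusInf) (n : ℕ) : ‖chiz z n‖ = 1 := by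
  simp [chiz, norm_prod, Circle.norm_coe]

lemma chiz_mul (w z : TorusInf) (n : ℕ) : chiz (w * z) n = chiz w n * chiz z n := by
  simp only [chiz, ← prod_mul_distrib, ← mul_pow, Pi.mul_apply, Circle.coe_mul]

lemma chiz_update_one {p : ℕ} (hp : p.Prime) (ζ : Circle) (n : ℕ) :
    chiz (Function.update 1 (Nat.count Nat.Prime p) ζ) n = (ζ : ℂ) ^ n.factorization p := by
  rw [chiz, prod_eq_single p]
  · simp
  · intro q hq hqp
    rw [Function.update_of_ne fun h => hqp (Nat.count_injective (Nat.prime_of_mem_primeFactors hq)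
      hp h)]
    simp
  · intro hp'
    rw [← Nat.support_factorization, Finsupp.notMem_support_iff] at hp'
    simp [hp']

lemma exists_conj_chiz_mul_chiz_eq_neg_one {n m : ℕ} (hn : n ≠ 0) (hm : m ≠ 0) (hnm : n ≠ m) :
    ∃ w, conj (chiz w n) * chiz w m = -1 := by
  obtain ⟨p, hp⟩ : ∃ p, n.factorization p ≠ m.factorization p := by
    by_contra! h
    exact hnm (Nat.factorization_inj hn hm (Finsupp.ext h))
  have hprime : p.Prime := by
    by_contra h
    simp [Nat.factorization_eq_zero_of_not_prime _ h] at hp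
  set d : ℤ := m.factorization p - n.factorization p with hd_def
  have hd : (d : ℝ) ≠ 0 := by
    rw [Int.cast_ne_zero, hd_def, sub_ne_zero]
    exact_mod_cast hp.symm
  set ζ := Circle.exp (Real.pi / d)
  have hζ : ((ζ ^ d : Circle) : ℂ) = -1 := by
    rw [← Circle.exp_intCast_mul, mul_div_cancel₀ _ hd, Circle.coe_exp, Complex.exp_pi_mul_I]
  refine ⟨Function.update 1 (Nat.count Nat.Prime p) ζ, ?_⟩
  rw [chiz_update_one hprime, chiz_update_one hprime, ← hζ, hd_def, zpow_sub, zpow_natCast,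
    zpow_natCast]
  simp [← Circle.coe_inv_eq_conj, mul_comm]

lemma integral_conj_chiz_mul_chiz {n m : ℕ} (hn : n ≠ 0) (hm : m ≠ 0) (hnm : n ≠ m) :
    ∫ z, conj (chiz z n) * chiz z m ∂haarT = 0 := by
  obtain ⟨w, hw⟩ := exists_conj_chiz_mul_chiz_eq_neg_one hn hm hnm
  refine integral_eq_zero_of_mul_left_eq_neg (g := w) fun z => ?_
  rw [chiz_mul, chiz_mul, map_mul, neg_eq_neg_one_mul, ← hw]
  ring

lemma memLp_mul_chiz (c : ℂ) (n : ℕ) : MemLp (fun z => c * chiz z n) 2 haarT :=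
  MemLp.of_bound (continuous_const.mul (continuous_chiz n)).aestronglyMeasurable ‖c‖
    (ae_of_all _ fun z => by simp [norm_chiz])

lemma eLpNorm_mul_chiz (c : ℂ) (n : ℕ) : eLpNorm (fun z => c * chiz z n) 2 haarT = ‖c‖ₑ := by
  rw [eLpNorm_congr_enorm_ae (g := fun _ => c) (ae_of_all _ fun z => by
    simp [← ofReal_norm, norm_chiz]), eLpNorm_const c two_ne_zero (IsProbabilityMeasure.ne_zero _)]
  simp

-- `χ_z(0) = χ_z(1) = 1`, so orthogonality needs the index `0` to carry no weight.
lemma eLpNorm_sum_mul_chiz {b : ℕ → ℂ} (hb : b 0 = 0) (t : Finset ℕ) :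
    eLpNorm (fun z => ∑ n ∈ t, b n * chiz z n) 2 haarT =
      (∑ n ∈ t, ‖b n‖ₑ ^ 2) ^ (1 / 2 : ℝ) := by
  have horth : Pairwise fun n m => ∫ z, ⟪b n * chiz z n, b m * chiz z m⟫_ℂ ∂haarT = 0 := by
    intro n m hnm
    rcases eq_or_ne n 0 with rfl | hn
    · simp [hb]
    rcases eq_or_ne m 0 with rfl | hm
    · simp [hb]
    simp_rw [RCLike.inner_apply', map_mul, mul_mul_mul_comm, integral_const_mul,
      integral_conj_chiz_mul_chiz hn hm hnm, mul_zero]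
  rw [← ENNReal.sq_rpow_half (eLpNorm _ _ _),
    eLpNorm_sum_sq_eq_of_orthogonal (fun n => memLp_mul_chiz (b n) n) horth]
  simp_rw [eLpNorm_mul_chiz]

lemma rpow_neg_le_pow_of_two_pow_le {u : ℝ} (hu : 0 ≤ u) {k n : ℕ} (h : 2 ^ k ≤ n) :
    (n : ℝ) ^ (-u) ≤ ((2 : ℝ) ^ (-u)) ^ k :=
  calc (n : ℝ) ^ (-u) ≤ ((2 : ℝ) ^ k) ^ (-u) :=
        Real.rpow_le_rpow_of_nonpos (by positivity) (by exact_mod_cast h) (by linarith)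
    _ = ((2 : ℝ) ^ (-u)) ^ k := by
        rw [← Real.rpow_natCast, ← Real.rpow_mul zero_le_two, mul_comm, Real.rpow_mul zero_le_two,
          Real.rpow_natCast]

lemma sum_Ico_dyadic_enorm_sq_le {u : ℝ} (hu : 0 ≤ u) (a : ℕ → ℂ) (k : ℕ) :
    ∑ n ∈ Ico (2 ^ k) (2 ^ k + 2 ^ k), ‖a n * (((n : ℝ) ^ (-u) : ℝ) : ℂ)‖ₑ ^ 2 ≤
      ENNReal.ofReal (((2 : ℝ) ^ (-u)) ^ k) ^ 2 * ∑' n, ‖a n‖ₑ ^ 2 :=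
  calc ∑ n ∈ Ico (2 ^ k) (2 ^ k + 2 ^ k), ‖a n * (((n : ℝ) ^ (-u) : ℝ) : ℂ)‖ₑ ^ 2
      ≤ ∑ n ∈ Ico (2 ^ k) (2 ^ k + 2 ^ k), (ENNReal.ofReal (((2 : ℝ) ^ (-u)) ^ k) * ‖a n‖ₑ) ^ 2 := by
        refine sum_le_sum fun n hn => ?_
        rw [enorm_mul, mul_comm, ← ofReal_norm (((n : ℝ) ^ (-u) : ℝ) : ℂ), Complex.norm_real,
          Real.norm_of_nonneg (by positivity)]
        gcongr
        exact rpow_neg_le_pow_of_two_pow_le hu (mem_Ico.mp hn).1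
    _ ≤ ENNReal.ofReal (((2 : ℝ) ^ (-u)) ^ k) ^ 2 * ∑' n, ‖a n‖ₑ ^ 2 := by
        simp_rw [mul_pow, ← mul_sum]
        gcongr
        exact ENNReal.sum_le_tsum _

lemma eLpNorm_maxPartialSum_dyadic_le {u : ℝ} (hu : 0 ≤ u) {a : ℕ → ℂ} (ha0 : a 0 = 0) (k : ℕ) :
    eLpNorm (fun z => maxPartialSum (fun n => a n * (((n : ℝ) ^ (-u) : ℝ) : ℂ) * chiz z n)
        (2 ^ k) (2 ^ k)) 2 haarT ≤
      (k + 1) * ENNReal.ofReal (((2 : ℝ) ^ (-u)) ^ k) * (∑' n, ‖a n‖ₑ ^ 2) ^ (1 / 2 : ℝ) :=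
  calc _ ≤ (k + 1) * (∑ n ∈ Ico (2 ^ k) (2 ^ k + 2 ^ k),
          ‖a n * (((n : ℝ) ^ (-u) : ℝ) : ℂ)‖ₑ ^ 2) ^ (1 / 2 : ℝ) :=
        eLpNorm_maxPartialSum_le
          (fun n => (continuous_const.mul (continuous_chiz n)).aestronglyMeasurable)
          (fun s m => (eLpNorm_sum_mul_chiz (by simp [ha0]) _).le) k _
    _ ≤ (k + 1) * (ENNReal.ofReal (((2 : ℝ) ^ (-u)) ^ k) ^ 2 * ∑' n, ‖a n‖ₑ ^ 2) ^ (1 / 2 : ℝ) := by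
        gcongr
        exact sum_Ico_dyadic_enorm_sq_le hu a k
    _ = _ := by rw [ENNReal.mul_rpow_of_nonneg _ _ (by norm_num), ENNReal.sq_rpow_half, mul_assoc]

lemma tsum_succ_mul_ofReal_geometric {r : ℝ} (hr0 : 0 ≤ r) (hr1 : r < 1) :
    ∑' k : ℕ, ((k : ℝ≥0∞) + 1) * ENNReal.ofReal (r ^ k) = ENNReal.ofReal (1 / (1 - r) ^ 2) := by
  have h := hasSum_choose_mul_geometric_of_norm_lt_one 1 (r := r)
    (by rwa [Real.norm_of_nonneg hr0])
  simp only [Nat.choose_one_right, Nat.cast_add, Nat.cast_one, one_add_one_eq_two] at h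
  rw [← h.tsum_eq, ENNReal.ofReal_tsum_of_nonneg (fun k => by positivity) h.summable]
  congr 1 with k
  rw [ENNReal.ofReal_mul (by positivity)]
  norm_cast

/-- For every `u > 0` there is `C = C(u) > 0` such that for every square-summable
sequence `(a_n)_{n ≥ 1}` (encoded as `a : ℕ → ℂ` with `a 0 = 0`),
`(∫_{𝕋^∞} sup_N |∑_{n=1}^N a_n n^{-u} χ_z(n)|² dm)^{1/2} ≤ C (∑ |a_n|²)^{1/2}`. -/
theorem maximal_inequality_H2 (u : ℝ) (hu : 0 < u) :
    ∃ C : ℝ, 0 < C ∧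
      ∀ a : ℕ → ℂ, a 0 = 0 → (Summable fun n => ‖a n‖ ^ 2) →
        (∫⁻ z, (⨆ N : ℕ,
            (‖∑ n ∈ Finset.Icc 1 N, a n * (((n : ℝ) ^ (-u) : ℝ) : ℂ) * chiz z n‖₊ : ℝ≥0∞)) ^ 2
          ∂haarT) ^ (1 / 2 : ℝ)
        ≤ ENNReal.ofReal C * (∑' n : ℕ, (‖a n‖₊ : ℝ≥0∞) ^ 2) ^ (1 / 2 : ℝ) := by
  set r : ℝ := (2 : ℝ) ^ (-u)
  have hr0 : 0 ≤ r := by positivity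
  have hr1 : r < 1 := Real.rpow_lt_one_of_one_lt_of_neg one_lt_two (neg_lt_zero.mpr hu)
  refine ⟨1 / (1 - r) ^ 2, one_div_pos.mpr (pow_pos (sub_pos.mpr hr1) 2), fun a ha0 _ => ?_⟩
  set F : ℕ → TorusInf → ℂ := fun n z => a n * (((n : ℝ) ^ (-u) : ℝ) : ℂ) * chiz z n
  have hF : ∀ n, AEStronglyMeasurable (F n) haarT := fun n =>
    (continuous_const.mul (continuous_chiz n)).aestronglyMeasurable
  calc _ = eLpNorm (fun z => ⨆ N, ‖∑ n ∈ Icc 1 N, F n z‖ₑ) 2 haarT :=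
        (eLpNorm_two_eq_lintegral_sq_rpow_half _).symm
    _ ≤ eLpNorm (fun z => ∑' k, maxPartialSum (F · z) (2 ^ k) (2 ^ k)) 2 haarT :=
        eLpNorm_mono_enorm fun z => by
          simpa only [enorm_eq_self] using
            iSup_le fun N => enorm_sum_Icc_one_le_tsum_maxPartialSum (F · z) N
    _ ≤ ∑' k, eLpNorm (fun z => maxPartialSum (F · z) (2 ^ k) (2 ^ k)) 2 haarT :=
        eLpNorm_tsum_le one_le_two ENNReal.ofNat_ne_top
          fun k => aemeasurable_maxPartialSum hF _ _
    _ ≤ ∑' k : ℕ, (k + 1) * ENNReal.ofReal (r ^ k) * (∑' n, ‖a n‖ₑ ^ 2) ^ (1 / 2 : ℝ) :=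
        ENNReal.tsum_le_tsum fun k => eLpNorm_maxPartialSum_dyadic_le hu.le ha0 k
    _ = _ := by rw [ENNReal.tsum_mul_right, tsum_succ_mul_ofReal_geometric hr0 hr1]; rfl
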